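/- There exists a unique ℂ-bilinear form ⟨−,−⟩ : ℂ[X^{±1}] × ℂ[X^{±1}] → ℂ such that ⟨1, 1⟩ = 1 and ⟨π(φ(h))(u), v⟩ = ⟨u, π(h)(v)⟩ for all h ∈ H_{q,t} and all u, v ∈ ℂ[X^{±1}] (the Dunkl–Cherednik pairing on the polynomial representation). -/

import Mathlib

/-!
The annihilator of `1` in the polynomial representation is the left ideal
`I = H(Y - t) + H(T - t)`. Indeed `H = I + ℂ[X^{±1}]`, since this subspace contains `1` and is
stable under left multiplication by the generators (for `T` by straightening `T X^n` into
`ℂ[X^{±1}] + ℂ[X^{±1}] T`, for `Y⁻¹` by the relation `Y⁻¹ X = q² X T² Y⁻¹`), while `f(X) · 1 = f`.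

Let `ε` be evaluation at `X = t⁻¹`. As `ε ∘ π(X⁻¹) = ε ∘ π(T) = t ε`, the functional `ε ∘ π(d)`
vanishes for `d ∈ φ⁻¹(I) = (X⁻¹ - t)H + (T - t)H`. With `θ(u) = φ⁻¹(u(X))`, the form
`⟨u, v⟩ = ε(π(θ u) v)` is therefore adjoint: `φ` sends `θ(π(φ h) u) - θ(u) h` into the annihilator
of `1`. Conversely, adjointness for `X` forces `⟨1, X^n⟩ = t^{-n}`, i.e. `⟨1, -⟩ = ε`, and then
`⟨u, v⟩ = ⟨π(φ θ(u)) 1, v⟩ = ⟨1, π(θ u) v⟩`.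
-/

noncomputable section

/-- Generators of the double affine Hecke algebra of type `A₁`. -/
inductive DGen : Type
  | X | Xi | Y | Yi | T

/-- The defining relations of the double affine Hecke algebra `H_{q,t}` of type `A₁`. -/
inductive DahaRel (q t : ℂ) : FreeAlgebra ℂ DGen → FreeAlgebra ℂ DGen → Prop
  | XXi : DahaRel q t (FreeAlgebra.ι ℂ DGen.X * FreeAlgebra.ι ℂ DGen.Xi) 1
  | XiX : DahaRel q t (FreeAlgebra.ι ℂ DGen.Xi * FreeAlgebra.ι ℂ DGen.X) 1
  | YYi : DahaRel q t (FreeAlgebra.ι ℂ DGen.Y * FreeAlgebra.ι ℂ DGen.Yi) 1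
  | YiY : DahaRel q t (FreeAlgebra.ι ℂ DGen.Yi * FreeAlgebra.ι ℂ DGen.Y) 1
  | TXT : DahaRel q t
      (FreeAlgebra.ι ℂ DGen.T * FreeAlgebra.ι ℂ DGen.X * FreeAlgebra.ι ℂ DGen.T)
      (FreeAlgebra.ι ℂ DGen.Xi)
  | TYiT : DahaRel q t
      (FreeAlgebra.ι ℂ DGen.T * FreeAlgebra.ι ℂ DGen.Yi * FreeAlgebra.ι ℂ DGen.T)
      (FreeAlgebra.ι ℂ DGen.Y)
  | XY : DahaRel q t (FreeAlgebra.ι ℂ DGen.X * FreeAlgebra.ι ℂ DGen.Y)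
      ((q ^ 2) • (FreeAlgebra.ι ℂ DGen.Y * FreeAlgebra.ι ℂ DGen.X *
        FreeAlgebra.ι ℂ DGen.T * FreeAlgebra.ι ℂ DGen.T))
  | hecke : DahaRel q t
      ((FreeAlgebra.ι ℂ DGen.T - algebraMap ℂ (FreeAlgebra ℂ DGen) t) *
        (FreeAlgebra.ι ℂ DGen.T + algebraMap ℂ (FreeAlgebra ℂ DGen) t⁻¹)) 0

/-- The double affine Hecke algebra `H_{q,t}` of type `A₁`. -/
abbrev DAHA (q t : ℂ) : Type := RingQuot (DahaRel q t)

/-- The generator `X` of `H_{q,t}`. -/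
def Xg (q t : ℂ) : DAHA q t := RingQuot.mkAlgHom ℂ (DahaRel q t) (FreeAlgebra.ι ℂ DGen.X)
/-- The generator `X⁻¹` of `H_{q,t}`. -/
def Xig (q t : ℂ) : DAHA q t := RingQuot.mkAlgHom ℂ (DahaRel q t) (FreeAlgebra.ι ℂ DGen.Xi)
/-- The generator `Y` of `H_{q,t}`. -/
def Yg (q t : ℂ) : DAHA q t := RingQuot.mkAlgHom ℂ (DahaRel q t) (FreeAlgebra.ι ℂ DGen.Y)
/-- The generator `Y⁻¹` of `H_{q,t}`. -/
def Yig (q t : ℂ) : DAHA q t := RingQuot.mkAlgHom ℂ (DahaRel q t) (FreeAlgebra.ι ℂ DGen.Yi)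
/-- The generator `T` of `H_{q,t}`. -/
def Tg (q t : ℂ) : DAHA q t := RingQuot.mkAlgHom ℂ (DahaRel q t) (FreeAlgebra.ι ℂ DGen.T)

open LaurentPolynomial MulOpposite

namespace LaurentPolynomial

section Algebra

variable {R A : Type*} [CommSemiring R] [Semiring A] [Algebra R A]

def aeval (u : Aˣ) : R[T;T⁻¹] →ₐ[R] A :=
  AddMonoidAlgebra.lift R A ℤ ((Units.coeHom A).comp (zpowersHom Aˣ u))

@[simp]
theorem aeval_T (u : Aˣ) (n : ℤ) : aeval (R := R) u (T n) = ↑(u ^ n) := by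
  simp [aeval, T, -single_eq_C_mul_T]

theorem algHom_ext_T {F G : R[T;T⁻¹] →ₐ[R] A} (h : F (T 1) = G (T 1)) : F = G :=
  (AddMonoidAlgebra.lift R A ℤ).symm.injective (MonoidHom.ext_mint h)

theorem linearMap_ext_T {M : Type*} [AddCommMonoid M] [Module R M] {f g : R[T;T⁻¹] →ₗ[R] M}
    (h : ∀ n, f (T n) = g (T n)) : f = g := by
  refine LinearMap.ext fun p => ?_
  induction p using LaurentPolynomial.induction_on' with
  | add p q hp hq => rw [map_add, map_add, hp, hq]
  | C_mul_T n a => rw [← smul_eq_C_mul, map_smul, map_smul, h]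

theorem aeval_invert (u : Aˣ) (f : R[T;T⁻¹]) : aeval u (invert f) = aeval u⁻¹ f := by
  rw [← AlgEquiv.coe_toAlgHom, ← AlgHom.comp_apply]
  congr 1
  exact algHom_ext_T (by simp)

end Algebra

variable {t : ℂ}

theorem T_two_sub_one_ne_zero : (T 2 - 1 : ℂ[T;T⁻¹]) ≠ 0 :=
  sub_ne_zero.mpr fun h => by
    simpa using (AddMonoidAlgebra.single_left_inj (one_ne_zero (α := ℂ))).mp (h.trans T_zero.symm)

theorem eq_invert_of_apply_T {sh : Module.End ℂ ℂ[T;T⁻¹]} (hs : ∀ n, sh (T n) = T (-n)) :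
    sh = invert.toLinearMap :=
  linearMap_ext_T fun n => by simp [hs]

/-- `Th` is the Demazure–Lusztig operator `t s + (t - t⁻¹) (X² - 1)⁻¹ (s - 1)`, written without
the denominator. -/
def IsDemazureLusztig (t : ℂ) (Th : Module.End ℂ ℂ[T;T⁻¹]) : Prop :=
  ∀ f, (T 2 - 1) * Th f = t • ((T 2 - 1) * invert f) + (t - t⁻¹) • (invert f - f)

def evalInv (ht : t ≠ 0) : ℂ[T;T⁻¹] →ₐ[ℂ] ℂ := aeval (Units.mk0 t ht)⁻¹

@[simp]
theorem evalInv_T (ht : t ≠ 0) (n : ℤ) : evalInv ht (T n) = t⁻¹ ^ n := by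
  simp [evalInv, Units.val_zpow_eq_zpow_val]

variable {Th : Module.End ℂ ℂ[T;T⁻¹]}

theorem IsDemazureLusztig.apply_one (hT : IsDemazureLusztig t Th) : Th 1 = t • 1 :=
  mul_left_cancel₀ T_two_sub_one_ne_zero (by simpa using hT 1)

theorem IsDemazureLusztig.evalInv_apply (ht : t ≠ 0) (hT : IsDemazureLusztig t Th)
    (f : ℂ[T;T⁻¹]) : evalInv ht (Th f) = t * evalInv ht f := by
  -- `X² - 1` vanishes at `X = t⁻¹ = t`, but there `Th` is just `t s`
  by_cases htt : t⁻¹ = t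
  · have hTf : Th f = t • invert f := mul_left_cancel₀ T_two_sub_one_ne_zero (by
      rw [hT, htt, sub_self, zero_smul, add_zero, mul_smul_comm])
    have hu : (Units.mk0 t ht)⁻¹⁻¹ = (Units.mk0 t ht)⁻¹ := Units.ext (by simp [htt])
    rw [hTf, map_smul, smul_eq_mul, evalInv, aeval_invert, hu]
  · have h := congrArg (evalInv ht) (hT f)
    simp only [map_add, map_sub, map_mul, map_smul, map_one, evalInv_T, zpow_two, smul_eq_mul] at h
    have hfac : (t⁻¹ - t) * (t⁻¹ * evalInv ht (Th f) - evalInv ht f) = 0 := by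
      linear_combination h + (t⁻¹ * evalInv ht (invert f) - evalInv ht (Th f)) * mul_inv_cancel₀ ht
    have hA := sub_eq_zero.mp ((mul_eq_zero.mp hfac).resolve_left (sub_ne_zero.mpr htt))
    rw [← hA, mul_inv_cancel_left₀ ht]

end LaurentPolynomial

def LinearMap.opAlgEquivOfBijective {R A : Type*} [CommSemiring R] [Semiring A] [Algebra R A]
    (φ : A →ₗ[R] A) (hbij : Function.Bijective φ) (h1 : φ 1 = 1)
    (hmul : ∀ a b, φ (a * b) = φ b * φ a) : A ≃ₐ[R] Aᵐᵒᵖ :=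
  AlgEquiv.ofBijective
    (AlgHom.ofLinearMap ((opLinearEquiv R).toLinearMap ∘ₗ φ) (by simp [h1]) (by simp [hmul]))
    ((opLinearEquiv R).bijective.comp hbij)

namespace DAHA

variable {q t : ℂ}

theorem Xg_mul_Xig : Xg q t * Xig q t = 1 := by
  simpa [Xg, Xig] using RingQuot.mkAlgHom_rel ℂ (DahaRel.XXi (q := q) (t := t))

theorem Xig_mul_Xg : Xig q t * Xg q t = 1 := by
  simpa [Xg, Xig] using RingQuot.mkAlgHom_rel ℂ (DahaRel.XiX (q := q) (t := t))

theorem Yg_mul_Yig : Yg q t * Yig q t = 1 := by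
  simpa [Yg, Yig] using RingQuot.mkAlgHom_rel ℂ (DahaRel.YYi (q := q) (t := t))

theorem Yig_mul_Yg : Yig q t * Yg q t = 1 := by
  simpa [Yg, Yig] using RingQuot.mkAlgHom_rel ℂ (DahaRel.YiY (q := q) (t := t))

theorem Tg_mul_Xg_mul_Tg : Tg q t * Xg q t * Tg q t = Xig q t := by
  simpa [Tg, Xg, Xig] using RingQuot.mkAlgHom_rel ℂ (DahaRel.TXT (q := q) (t := t))

theorem Tg_mul_Yig_mul_Tg : Tg q t * Yig q t * Tg q t = Yg q t := by
  simpa [Tg, Yg, Yig] using RingQuot.mkAlgHom_rel ℂ (DahaRel.TYiT (q := q) (t := t))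

theorem Xg_mul_Yg : Xg q t * Yg q t = q ^ 2 • (Yg q t * Xg q t * Tg q t * Tg q t) := by
  simpa [Xg, Yg, Tg] using RingQuot.mkAlgHom_rel ℂ (DahaRel.XY (q := q) (t := t))

theorem Tg_sub_mul_Tg_add : (Tg q t - t • 1) * (Tg q t + t⁻¹ • 1) = 0 := by
  simpa [Tg, Algebra.algebraMap_eq_smul_one] using
    RingQuot.mkAlgHom_rel ℂ (DahaRel.hecke (q := q) (t := t))

def Tig (q t : ℂ) : DAHA q t := Tg q t - (t - t⁻¹) • 1

theorem Tg_mul_Tg (ht : t ≠ 0) : Tg q t * Tg q t = (t - t⁻¹) • Tg q t + 1 := by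
  rw [← sub_eq_zero, ← Tg_sub_mul_Tg_add (q := q)]
  simp only [sub_mul, mul_add, smul_mul_assoc, mul_smul_comm, one_mul, mul_one]
  match_scalars
  · rfl
  · ring
  · field_simp

theorem Tg_mul_Tig (ht : t ≠ 0) : Tg q t * Tig q t = 1 := by
  rw [Tig, mul_sub, Tg_mul_Tg ht, mul_smul_comm, mul_one, add_sub_cancel_left]

theorem Tig_mul_Tg (ht : t ≠ 0) : Tig q t * Tg q t = 1 := by
  rw [Tig, sub_mul, Tg_mul_Tg ht, smul_mul_assoc, one_mul, add_sub_cancel_left]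

theorem Tg_mul_Xg (ht : t ≠ 0) : Tg q t * Xg q t = Xig q t * Tig q t := by
  rw [← Tg_mul_Xg_mul_Tg, mul_assoc _ (Tg q t), Tg_mul_Tig ht, mul_one]

theorem Tg_mul_Xig (ht : t ≠ 0) :
    Tg q t * Xig q t = Xg q t * Tg q t + (t - t⁻¹) • Xig q t := by
  rw [← Tg_mul_Xg_mul_Tg, ← mul_assoc, ← mul_assoc, Tg_mul_Tg ht]
  simp only [add_mul, smul_mul_assoc, one_mul, Tg_mul_Xg_mul_Tg]
  abel

theorem Yig_mul_Xg : Yig q t * Xg q t = q ^ 2 • (Xg q t * Tg q t * Tg q t * Yig q t) := by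
  calc Yig q t * Xg q t = Yig q t * (Xg q t * Yg q t) * Yig q t := by
        rw [mul_assoc, mul_assoc, Yg_mul_Yig, mul_one]
    _ = q ^ 2 • (Yig q t * Yg q t * (Xg q t * Tg q t * Tg q t * Yig q t)) := by
        rw [Xg_mul_Yg]; simp only [mul_smul_comm, smul_mul_assoc, mul_assoc]
    _ = q ^ 2 • (Xg q t * Tg q t * Tg q t * Yig q t) := by rw [Yig_mul_Yg, one_mul]

theorem Tig_mul_Tig_mul_Xig_mul_Yig (ht : t ≠ 0) :
    Tig q t * Tig q t * Xig q t * Yig q t = q ^ 2 • (Yig q t * Xig q t) := by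
  calc Tig q t * Tig q t * Xig q t * Yig q t
      = Tig q t * Tig q t * Xig q t * (Yig q t * Xg q t) * Xig q t := by
        simp only [mul_assoc, Xg_mul_Xig, mul_one]
    _ = q ^ 2 • (Tig q t * (Tig q t * Tg q t) * Tg q t * Yig q t * Xig q t) := by
        rw [Yig_mul_Xg]
        simp only [mul_smul_comm, smul_mul_assoc, ← mul_assoc]
        rw [mul_assoc _ (Xig q t), Xig_mul_Xg, mul_one]
    _ = q ^ 2 • (Yig q t * Xig q t) := by
        rw [Tig_mul_Tg ht, mul_one, Tig_mul_Tg ht, one_mul]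

theorem mul_mem_of_generators (W : Submodule ℂ (DAHA q t))
    (hX : ∀ w ∈ W, Xg q t * w ∈ W) (hXi : ∀ w ∈ W, Xig q t * w ∈ W)
    (hY : ∀ w ∈ W, Yg q t * w ∈ W) (hYi : ∀ w ∈ W, Yig q t * w ∈ W)
    (hT : ∀ w ∈ W, Tg q t * w ∈ W) (h : DAHA q t) {w : DAHA q t} (hw : w ∈ W) : h * w ∈ W := by
  obtain ⟨a, rfl⟩ := RingQuot.mkAlgHom_surjective ℂ (DahaRel q t) h
  induction a using FreeAlgebra.induction generalizing w with
  | grade0 r => rw [AlgHom.commutes, ← Algebra.smul_def]; exact W.smul_mem r hw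
  | grade1 x =>
    cases x
    exacts [hX w hw, hXi w hw, hY w hw, hYi w hw, hT w hw]
  | mul a b ha hb => rw [map_mul, mul_assoc]; exact ha (hb hw)
  | add a b ha hb => rw [map_add, add_mul]; exact add_mem (ha hw) (hb hw)

def Xunit (q t : ℂ) : (DAHA q t)ˣ := ⟨Xg q t, Xig q t, Xg_mul_Xig, Xig_mul_Xg⟩

def xPoly (q t : ℂ) : ℂ[T;T⁻¹] →ₐ[ℂ] DAHA q t := aeval (Xunit q t)

@[simp]
theorem xPoly_T_one : xPoly q t (T 1) = Xg q t := by simp [xPoly, Xunit]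

@[simp]
theorem xPoly_T_neg_one : xPoly q t (T (-1)) = Xig q t := by simp [xPoly, Xunit]

/-- The left ideal `H(Y - t) + H(T - t)` (an `Ideal` of a noncommutative ring is a left ideal). -/
def annIdeal (q t : ℂ) : Ideal (DAHA q t) := Ideal.span {Yg q t - t • 1, Tg q t - t • 1}

def annSupXPoly (q t : ℂ) : Submodule ℂ (DAHA q t) :=
  (annIdeal q t).restrictScalars ℂ ⊔ LinearMap.range (xPoly q t).toLinearMap

theorem xPoly_mem_annSupXPoly (f : ℂ[T;T⁻¹]) : xPoly q t f ∈ annSupXPoly q t :=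
  Submodule.mem_sup_right ⟨f, rfl⟩

theorem mul_Yg_sub_mem_annSupXPoly (a : DAHA q t) : a * (Yg q t - t • 1) ∈ annSupXPoly q t :=
  Submodule.mem_sup_left (Ideal.mul_mem_left _ a (Ideal.subset_span (by simp)))

theorem mul_Tg_sub_mem_annSupXPoly (a : DAHA q t) : a * (Tg q t - t • 1) ∈ annSupXPoly q t :=
  Submodule.mem_sup_left (Ideal.mul_mem_left _ a (Ideal.subset_span (by simp)))

theorem mul_mem_annSupXPoly_of_forall_T {g : DAHA q t}
    (hg : ∀ n : ℤ, g * xPoly q t (T n) ∈ annSupXPoly q t) {w : DAHA q t}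
    (hw : w ∈ annSupXPoly q t) : g * w ∈ annSupXPoly q t := by
  obtain ⟨i, hi, _, ⟨f, rfl⟩, rfl⟩ := Submodule.mem_sup.mp hw
  clear hw
  rw [mul_add]
  refine add_mem (Submodule.mem_sup_left (Ideal.mul_mem_left _ g hi)) ?_
  induction f using LaurentPolynomial.induction_on' with
  | add f₁ f₂ h₁ h₂ => rw [AlgHom.toLinearMap_apply, map_add, mul_add]; exact add_mem h₁ h₂
  | C_mul_T n a =>
    rw [AlgHom.toLinearMap_apply, ← smul_eq_C_mul, map_smul, mul_smul_comm]
    exact Submodule.smul_mem _ a (hg n)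

theorem Xg_mul_mem {w : DAHA q t} (hw : w ∈ annSupXPoly q t) : Xg q t * w ∈ annSupXPoly q t :=
  mul_mem_annSupXPoly_of_forall_T
    (fun n => by rw [← xPoly_T_one, ← map_mul]; exact xPoly_mem_annSupXPoly _) hw

theorem Xig_mul_mem {w : DAHA q t} (hw : w ∈ annSupXPoly q t) :
    Xig q t * w ∈ annSupXPoly q t :=
  mul_mem_annSupXPoly_of_forall_T
    (fun n => by rw [← xPoly_T_neg_one, ← map_mul]; exact xPoly_mem_annSupXPoly _) hw

theorem exists_Tg_mul_xPoly_T (ht : t ≠ 0) (n : ℤ) :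
    ∃ f₁ f₂, Tg q t * xPoly q t (T n) = xPoly q t f₁ + xPoly q t f₂ * Tg q t := by
  induction n using Int.induction_on with
  | zero => exact ⟨0, 1, by simp⟩
  | succ n ih =>
    obtain ⟨f₁, f₂, hf⟩ := ih
    refine ⟨f₁ * T 1 - (t - t⁻¹) • (f₂ * T (-1)), f₂ * T (-1), ?_⟩
    rw [T_add, map_mul, xPoly_T_one, ← mul_assoc, hf]
    simp only [map_sub, map_smul, map_mul, xPoly_T_one, xPoly_T_neg_one, add_mul, mul_assoc,
      Tg_mul_Xg ht, Tig, mul_sub, mul_smul_comm, mul_one]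
    abel
  | pred n ih =>
    obtain ⟨f₁, f₂, hf⟩ := ih
    refine ⟨f₁ * T (-1) + (t - t⁻¹) • (f₂ * T (-1)), f₂ * T 1, ?_⟩
    rw [T_sub, map_mul, xPoly_T_neg_one, ← mul_assoc, hf]
    simp only [map_add, map_smul, map_mul, xPoly_T_one, xPoly_T_neg_one, add_mul, mul_assoc,
      Tg_mul_Xig ht, mul_add, mul_smul_comm]
    abel

theorem Tg_mul_mem (ht : t ≠ 0) {w : DAHA q t} (hw : w ∈ annSupXPoly q t) :
    Tg q t * w ∈ annSupXPoly q t := by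
  refine mul_mem_annSupXPoly_of_forall_T (fun n => ?_) hw
  obtain ⟨f₁, f₂, hf⟩ := exists_Tg_mul_xPoly_T ht n
  have hsplit : xPoly q t f₂ * Tg q t = xPoly q t f₂ * (Tg q t - t • 1) + t • xPoly q t f₂ := by
    rw [mul_sub, mul_smul_comm, mul_one, sub_add_cancel]
  rw [hf, hsplit]
  exact add_mem (xPoly_mem_annSupXPoly f₁)
    (add_mem (mul_Tg_sub_mem_annSupXPoly _) (Submodule.smul_mem _ t (xPoly_mem_annSupXPoly f₂)))

theorem Tig_mul_mem (ht : t ≠ 0) {w : DAHA q t} (hw : w ∈ annSupXPoly q t) :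
    Tig q t * w ∈ annSupXPoly q t := by
  rw [Tig, sub_mul, smul_mul_assoc, one_mul]
  exact sub_mem (Tg_mul_mem ht hw) (Submodule.smul_mem _ _ hw)

theorem Yig_mul_mem (hq : q ≠ 0) (ht : t ≠ 0) {w : DAHA q t} (hw : w ∈ annSupXPoly q t) :
    Yig q t * w ∈ annSupXPoly q t := by
  refine mul_mem_annSupXPoly_of_forall_T (fun n => ?_) hw
  induction n using Int.induction_on with
  | zero =>
    have hYig : Yig q t = t⁻¹ • (xPoly q t 1 - Yig q t * (Yg q t - t • 1)) := by
      rw [map_one, mul_sub, Yig_mul_Yg, mul_smul_comm, mul_one, sub_sub_cancel, smul_smul,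
        inv_mul_cancel₀ ht, one_smul]
    rw [T_zero, map_one, mul_one, hYig]
    exact Submodule.smul_mem _ _ (sub_mem (xPoly_mem_annSupXPoly 1) (mul_Yg_sub_mem_annSupXPoly _))
  | succ n ih =>
    rw [add_comm, T_add, map_mul, xPoly_T_one, ← mul_assoc, Yig_mul_Xg, smul_mul_assoc]
    simp only [mul_assoc]
    exact Submodule.smul_mem _ _ (Xg_mul_mem (Tg_mul_mem ht (Tg_mul_mem ht ih)))
  | pred n ih =>
    have hYigXig : Yig q t * Xig q t = (q ^ 2)⁻¹ • (Tig q t * Tig q t * Xig q t * Yig q t) := by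
      rw [Tig_mul_Tig_mul_Xig_mul_Yig ht, smul_smul, inv_mul_cancel₀ (pow_ne_zero 2 hq),
        one_smul]
    rw [sub_eq_neg_add, T_add, map_mul, xPoly_T_neg_one, ← mul_assoc, hYigXig, smul_mul_assoc]
    simp only [mul_assoc]
    exact Submodule.smul_mem _ _ (Tig_mul_mem ht (Tig_mul_mem ht (Xig_mul_mem ih)))

theorem Yg_mul_mem (hq : q ≠ 0) (ht : t ≠ 0) {w : DAHA q t} (hw : w ∈ annSupXPoly q t) :
    Yg q t * w ∈ annSupXPoly q t := by
  rw [← Tg_mul_Yig_mul_Tg, mul_assoc, mul_assoc]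
  exact Tg_mul_mem ht (Yig_mul_mem hq ht (Tg_mul_mem ht hw))

theorem annSupXPoly_eq_top (hq : q ≠ 0) (ht : t ≠ 0) : annSupXPoly q t = ⊤ :=
  Submodule.eq_top_iff'.mpr fun h => by
    simpa using mul_mem_of_generators _ (fun _ => Xg_mul_mem) (fun _ => Xig_mul_mem)
      (fun _ => Yg_mul_mem hq ht) (fun _ => Yig_mul_mem hq ht) (fun _ => Tg_mul_mem ht) h
      (xPoly_mem_annSupXPoly 1)

theorem exists_mem_annIdeal_add_xPoly (hq : q ≠ 0) (ht : t ≠ 0) (h : DAHA q t) :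
    ∃ i ∈ annIdeal q t, ∃ f, i + xPoly q t f = h := by
  have hh : h ∈ annSupXPoly q t := annSupXPoly_eq_top hq ht ▸ Submodule.mem_top
  obtain ⟨i, hi, _, ⟨f, rfl⟩, hif⟩ := Submodule.mem_sup.mp hh
  exact ⟨i, hi, f, hif⟩

section Representation

variable (ρ : DAHA q t →ₐ[ℂ] Module.End ℂ ℂ[T;T⁻¹]) (φ : DAHA q t ≃ₐ[ℂ] (DAHA q t)ᵐᵒᵖ)

theorem comp_xPoly_eq_lmul (hX : ∀ f, ρ (Xg q t) f = T 1 * f) :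
    ρ.comp (xPoly q t) = Algebra.lmul ℂ ℂ[T;T⁻¹] :=
  algHom_ext_T (LinearMap.ext fun f => by simp [hX])

theorem xPoly_apply (hX : ∀ f, ρ (Xg q t) f = T 1 * f) (f g : ℂ[T;T⁻¹]) :
    ρ (xPoly q t f) g = f * g :=
  congr($(comp_xPoly_eq_lmul ρ hX) f g)

theorem Xig_apply (hX : ∀ f, ρ (Xg q t) f = T 1 * f) (f : ℂ[T;T⁻¹]) :
    ρ (Xig q t) f = T (-1) * f := by
  rw [← xPoly_T_neg_one, xPoly_apply ρ hX]

theorem Yig_apply_one (ht : t ≠ 0) (hY : ρ (Yg q t) 1 = t • 1) : ρ (Yig q t) 1 = t⁻¹ • 1 := by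
  rw [← inv_smul_smul₀ ht (ρ (Yig q t) 1), ← map_smul, ← hY, ← Module.End.mul_apply, ← map_mul,
    Yig_mul_Yg, map_one ρ, Module.End.one_apply]

theorem apply_one_eq_zero_of_mem_annIdeal (hY : ρ (Yg q t) 1 = t • 1)
    (hT : ρ (Tg q t) 1 = t • 1) {i : DAHA q t} (hi : i ∈ annIdeal q t) : ρ i 1 = 0 := by
  obtain ⟨a, b, rfl⟩ := Submodule.mem_span_pair.mp hi
  simp [hY, hT]

theorem mem_annIdeal_iff_apply_one_eq_zero (hq : q ≠ 0) (ht : t ≠ 0)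
    (hX : ∀ f, ρ (Xg q t) f = T 1 * f) (hY : ρ (Yg q t) 1 = t • 1) (hT : ρ (Tg q t) 1 = t • 1)
    {h : DAHA q t} : h ∈ annIdeal q t ↔ ρ h 1 = 0 := by
  refine ⟨apply_one_eq_zero_of_mem_annIdeal ρ hY hT, fun h1 => ?_⟩
  obtain ⟨i, hi, f, rfl⟩ := exists_mem_annIdeal_add_xPoly hq ht h
  have hf : f = 0 := by
    simpa [apply_one_eq_zero_of_mem_annIdeal ρ hY hT hi, xPoly_apply ρ hX] using h1
  simpa [hf] using hi

theorem map_Xig_eq_op_Yg (hφX : φ (Xg q t) = op (Yig q t)) : φ (Xig q t) = op (Yg q t) :=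
  calc φ (Xig q t) = op (Yg q t) * op (Yig q t) * φ (Xig q t) := by
        rw [← op_mul, Yig_mul_Yg, op_one, one_mul]
    _ = op (Yg q t) * φ (Xg q t * Xig q t) := by rw [map_mul, hφX, mul_assoc]
    _ = op (Yg q t) := by rw [Xg_mul_Xig, map_one, mul_one]

theorem evalInv_apply_eq_zero_of_mem_annIdeal (ht : t ≠ 0) (hX : ∀ f, ρ (Xg q t) f = T 1 * f)
    (hεT : ∀ f, evalInv ht (ρ (Tg q t) f) = t * evalInv ht f)
    (hφX : φ (Xg q t) = op (Yig q t)) (hφT : φ (Tg q t) = op (Tg q t)) {d : DAHA q t}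
    (hd : (φ d).unop ∈ annIdeal q t) (v : ℂ[T;T⁻¹]) : evalInv ht (ρ d v) = 0 := by
  obtain ⟨a, b, hab⟩ := Submodule.mem_span_pair.mp hd
  have hdecomp : d = (Xig q t - t • 1) * φ.symm (op a) + (Tg q t - t • 1) * φ.symm (op b) := by
    apply φ.injective
    rw [← op_unop (φ d), ← hab]
    simp [map_Xig_eq_op_Yg φ hφX, hφT]
  rw [hdecomp]
  simp only [map_add, map_mul, map_sub, map_smul, map_one, LinearMap.add_apply,
    LinearMap.sub_apply, LinearMap.smul_apply, Module.End.mul_apply, Module.End.one_apply,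
    Xig_apply ρ hX, hεT, evalInv_T, zpow_neg_one, inv_inv, smul_eq_mul]
  ring

def pairing (ht : t ≠ 0) : ℂ[T;T⁻¹] →ₗ[ℂ] ℂ[T;T⁻¹] →ₗ[ℂ] ℂ :=
  LinearMap.llcomp ℂ _ _ _ (evalInv ht).toLinearMap ∘ₗ ρ.toLinearMap ∘ₗ
    φ.symm.toLinearMap ∘ₗ (opLinearEquiv ℂ).toLinearMap ∘ₗ (xPoly q t).toLinearMap

theorem pairing_apply (ht : t ≠ 0) (u v : ℂ[T;T⁻¹]) :
    pairing ρ φ ht u v = evalInv ht (ρ (φ.symm (op (xPoly q t u))) v) :=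
  rfl

theorem pairing_one_one (ht : t ≠ 0) : pairing ρ φ ht 1 1 = 1 := by
  simp [pairing_apply]

theorem pairing_adjoint (hq : q ≠ 0) (ht : t ≠ 0) (hX : ∀ f, ρ (Xg q t) f = T 1 * f)
    (hY : ρ (Yg q t) 1 = t • 1) (hT : ρ (Tg q t) 1 = t • 1)
    (hεT : ∀ f, evalInv ht (ρ (Tg q t) f) = t * evalInv ht f)
    (hφX : φ (Xg q t) = op (Yig q t)) (hφT : φ (Tg q t) = op (Tg q t))
    (h : DAHA q t) (u v : ℂ[T;T⁻¹]) :
    pairing ρ φ ht (ρ (φ h).unop u) v = pairing ρ φ ht u (ρ h v) := by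
  set d := φ.symm (op (xPoly q t (ρ (φ h).unop u))) - φ.symm (op (xPoly q t u)) * h
  have hd : (φ d).unop ∈ annIdeal q t := by
    rw [mem_annIdeal_iff_apply_one_eq_zero ρ hq ht hX hY hT]
    simp [d, xPoly_apply ρ hX]
  have := evalInv_apply_eq_zero_of_mem_annIdeal ρ φ ht hX hεT hφX hφT hd v
  rwa [map_sub, LinearMap.sub_apply, map_sub, sub_eq_zero, map_mul, Module.End.mul_apply] at this

theorem eq_pairing (ht : t ≠ 0) (hX : ∀ f, ρ (Xg q t) f = T 1 * f)
    (hY : ρ (Yg q t) 1 = t • 1) (hφX : φ (Xg q t) = op (Yig q t))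
    (B : ℂ[T;T⁻¹] →ₗ[ℂ] ℂ[T;T⁻¹] →ₗ[ℂ] ℂ) (hB1 : B 1 1 = 1)
    (hB : ∀ (h : DAHA q t) (u v : ℂ[T;T⁻¹]), B (ρ (φ h).unop u) v = B u (ρ h v)) :
    B = pairing ρ φ ht := by
  have hB1v : B 1 = (evalInv ht).toLinearMap := by
    refine linearMap_ext_T fun n => ?_
    induction n using Int.induction_on with
    | zero => simpa using hB1
    | succ n ih =>
      have := hB (Xg q t) 1 (T n)
      rw [hφX, unop_op, Yig_apply_one ρ ht hY, hX, ← T_add, add_comm, map_smul,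
        LinearMap.smul_apply, ih] at this
      simp [← this, zpow_add_one₀ (inv_ne_zero ht), mul_comm]
    | pred n ih =>
      have := hB (Xig q t) 1 (T (-n))
      rw [map_Xig_eq_op_Yg φ hφX, unop_op, hY, Xig_apply ρ hX, ← T_add, map_smul,
        LinearMap.smul_apply, ih] at this
      rw [show -(n : ℤ) - 1 = -1 + -n by ring, ← this]
      simp [zpow_add_one₀ ht, mul_comm]
  refine LinearMap.ext₂ fun u v => ?_
  calc B u v = B (ρ (φ (φ.symm (op (xPoly q t u)))).unop 1) v := by simp [xPoly_apply ρ hX]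
    _ = pairing ρ φ ht u v := by rw [hB, hB1v]; rfl

end Representation

theorem existsUnique_pairing (hq : q ≠ 0) (ht : t ≠ 0)
    (ρ : DAHA q t →ₐ[ℂ] Module.End ℂ ℂ[T;T⁻¹]) (hX : ∀ f, ρ (Xg q t) f = T 1 * f)
    (hY : ρ (Yg q t) 1 = t • 1) (hT : ρ (Tg q t) 1 = t • 1)
    (hεT : ∀ f, evalInv ht (ρ (Tg q t) f) = t * evalInv ht f)
    (φ : DAHA q t ≃ₐ[ℂ] (DAHA q t)ᵐᵒᵖ) (hφX : φ (Xg q t) = op (Yig q t))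
    (hφT : φ (Tg q t) = op (Tg q t)) :
    ∃! B : ℂ[T;T⁻¹] →ₗ[ℂ] ℂ[T;T⁻¹] →ₗ[ℂ] ℂ,
      B 1 1 = 1 ∧ ∀ (h : DAHA q t) (u v : ℂ[T;T⁻¹]), B (ρ (φ h).unop u) v = B u (ρ h v) :=
  ⟨pairing ρ φ ht, ⟨pairing_one_one ρ φ ht, pairing_adjoint ρ φ hq ht hX hY hT hεT hφX hφT⟩,
    fun B ⟨hB1, hB⟩ => eq_pairing ρ φ ht hX hY hφX B hB1 hB⟩

end DAHA

open LaurentPolynomial in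
theorem dunkl_cherednik_pairing_general (q t : ℂ) (hq : q ≠ 0) (ht : t ≠ 0)
    (xh sh yh Th : Module.End ℂ (LaurentPolynomial ℂ))
    (hx : ∀ f, xh f = T 1 * f)
    (hs : ∀ n : ℤ, sh (T n) = T (-n))
    (hy : ∀ n : ℤ, yh (T n) = q ^ (-2 * n) • T n)
    (hT : ∀ f, (T 2 - 1) * Th f = t • ((T 2 - 1) * sh f) + (t - t⁻¹) • (sh f - f))
    (π : DAHA q t →ₐ[ℂ] Module.End ℂ (LaurentPolynomial ℂ))
    (hπX : π (Xg q t) = xh) (hπT : π (Tg q t) = Th) (hπY : π (Yg q t) = yh * sh * Th)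
    (φ : DAHA q t →ₗ[ℂ] DAHA q t)
    (hφbij : Function.Bijective φ) (hφ1 : φ 1 = 1)
    (hφmul : ∀ a b : DAHA q t, φ (a * b) = φ b * φ a)
    (hφX : φ (Xg q t) = Yig q t) (hφT : φ (Tg q t) = Tg q t) :
    ∃! B : LaurentPolynomial ℂ →ₗ[ℂ] LaurentPolynomial ℂ →ₗ[ℂ] ℂ,
      B 1 1 = 1 ∧
      ∀ (h : DAHA q t) (u v : LaurentPolynomial ℂ),
        B (π (φ h) u) v = B u (π h v) := by
  obtain rfl := eq_invert_of_apply_T hs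
  have hDL : IsDemazureLusztig t Th := hT
  have hyh : yh 1 = 1 := by simpa using hy 0
  exact DAHA.existsUnique_pairing hq ht π (by simpa [hπX] using hx)
    (by simp [hπY, hDL.apply_one, hyh]) (by rw [hπT, hDL.apply_one])
    (by simpa [hπT] using hDL.evalInv_apply ht)
    (φ.opAlgEquivOfBijective hφbij hφ1 hφmul) (congrArg op hφX) (congrArg op hφT)

open LaurentPolynomial in
/-- **Dunkl–Cherednik pairing**: there is a unique ℂ-bilinear form `⟨-,-⟩` on the polynomial
representation `ℂ[X^{±1}]` of `H_{q,t}` with `⟨1,1⟩ = 1` and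
`⟨π(φ(h))u, v⟩ = ⟨u, π(h)v⟩` for all `h ∈ H_{q,t}`, where `π` is the polynomial
representation (`π X = x̂`, `π T = T̂`, `π Y = Ŷ = ŷ∘ŝ∘T̂`) and `φ` is the anti-automorphism
with `φ(X) = Y⁻¹`, `φ(Y) = X⁻¹`, `φ(T) = T`. -/
theorem dunkl_cherednik_pairing (q t : ℂ) (hq : q ≠ 0) (ht : t ≠ 0)
    (xh sh yh Th : Module.End ℂ (LaurentPolynomial ℂ))
    (hx : ∀ f, xh f = T 1 * f)
    (hs : ∀ n : ℤ, sh (T n) = T (-n))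
    (hy : ∀ n : ℤ, yh (T n) = q ^ (-2 * n) • T n)
    (hT : ∀ f, (T 2 - 1) * Th f = t • ((T 2 - 1) * sh f) + (t - t⁻¹) • (sh f - f))
    (π : DAHA q t →ₐ[ℂ] Module.End ℂ (LaurentPolynomial ℂ))
    (hπX : π (Xg q t) = xh) (hπT : π (Tg q t) = Th) (hπY : π (Yg q t) = yh * sh * Th)
    (φ : DAHA q t →ₗ[ℂ] DAHA q t)
    (hφbij : Function.Bijective φ) (hφ1 : φ 1 = 1)
    (hφmul : ∀ a b : DAHA q t, φ (a * b) = φ b * φ a)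
    (hφX : φ (Xg q t) = Yig q t) (hφY : φ (Yg q t) = Xig q t) (hφT : φ (Tg q t) = Tg q t) :
    ∃! B : LaurentPolynomial ℂ →ₗ[ℂ] LaurentPolynomial ℂ →ₗ[ℂ] ℂ,
      B 1 1 = 1 ∧
      ∀ (h : DAHA q t) (u v : LaurentPolynomial ℂ),
        B (π (φ h) u) v = B u (π h v) :=
  dunkl_cherednik_pairing_general q t hq ht xh sh yh Th hx hs hy hT π hπX hπT hπY φ hφbij hφ1 hφmul
    hφX hφT
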